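/- Let α > −1. The function ln f(x⃗) = ∑_{i<j} ln(x_j − x_i) + ∑_{k=1}^n (α+1)/2 · ln x_k − (1/2)∑_{k=1}^n x_k is strictly concave on D_n = {x⃗ ∈ ℝⁿ : 0 < x_1 < ... < x_n}, and hence has at most one critical point in D_n. -/

import Mathlib

/-!
`F` splits as `∑_{i<j} log (x_j - x_i) + ∑_k φ (x_k)` with `φ t = (α+1)/2 · log t - t/2`.
Each `log (x_j - x_i)` is the concave `log` composed with a linear form that is positive on `D`,
and `φ` is strictly concave on `(0, ∞)` because `α + 1 > 0`, so the separable part is strictly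
concave; hence `F` is strictly concave on the convex set `D`. Restricting to segments, a critical
point of a differentiable concave function is a global maximum, and a strictly concave function
has at most one global maximiser.
-/

open Set

section Concavity

variable {E : Type*} [AddCommGroup E] [Module ℝ E] {s : Set E}

theorem ConcaveOn.sum {ι : Type*} {t : Finset ι} {f : ι → E → ℝ} (hs : Convex ℝ s)
    (hf : ∀ i ∈ t, ConcaveOn ℝ s (f i)) : ConcaveOn ℝ s (fun x => ∑ i ∈ t, f i x) := by
  classical
  induction t using Finset.induction_on with
  | empty => simpa using concaveOn_const 0 hs
  | insert i t hi ih =>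
    simp_rw [Finset.sum_insert hi]
    exact (hf i (Finset.mem_insert_self i t)).add
      (ih fun j hj => hf j (Finset.mem_insert_of_mem hj))

theorem StrictConcaveOn.const_mul {f : E → ℝ} {c : ℝ} (hf : StrictConcaveOn ℝ s f) (hc : 0 < c) :
    StrictConcaveOn ℝ s (fun x => c * f x) := by
  refine ⟨hf.1, fun x hx y hy hxy a b ha hb hab => ?_⟩
  have := mul_lt_mul_of_pos_left (hf.2 hx hy hxy ha hb hab) hc
  simp only [smul_eq_mul] at this ⊢
  linarith

end Concavity

theorem strictConcaveOn_univ_pi_sum {ι : Type*} [Fintype ι] {t : ι → Set ℝ} {g : ι → ℝ → ℝ}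
    (hg : ∀ i, StrictConcaveOn ℝ (t i) (g i)) :
    StrictConcaveOn ℝ (univ.pi t) (fun x => ∑ i, g i (x i)) := by
  refine ⟨convex_pi fun i _ => (hg i).1, fun x hx y hy hxy a b ha hb hab => ?_⟩
  obtain ⟨k, hk⟩ := Function.ne_iff.1 hxy
  simp only [smul_eq_mul, Finset.mul_sum, ← Finset.sum_add_distrib, Pi.add_apply, Pi.smul_apply]
  refine Finset.sum_lt_sum (fun i _ => ?_) ⟨k, Finset.mem_univ k, ?_⟩
  · simpa using (hg i).concaveOn.2 (hx i trivial) (hy i trivial) ha.le hb.le hab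
  · simpa using (hg k).2 (hx k trivial) (hy k trivial) hk ha hb hab

section CriticalPoints

variable {E : Type*} [NormedAddCommGroup E] [NormedSpace ℝ E] {s : Set E} {f : E → ℝ} {x y : E}

theorem ConcaveOn.isMaxOn_of_hasFDerivAt_eq_zero (hf : ConcaveOn ℝ s f) (hx : x ∈ s)
    (hf' : HasFDerivAt f (0 : E →L[ℝ] ℝ) x) : IsMaxOn f s x := by
  intro z hz
  set g : ℝ → ℝ := f ∘ AffineMap.lineMap x z
  have hg : ConcaveOn ℝ (Icc 0 1) g :=
    (hf.comp_affineMap (AffineMap.lineMap x z)).subset (fun t ht => hf.1.lineMap_mem hx hz ht)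
      (convex_Icc 0 1)
  have hg' : HasDerivAt g 0 0 := by
    have hf0 : HasFDerivAt f (0 : E →L[ℝ] ℝ) (AffineMap.lineMap x z (0 : ℝ)) := by simpa using hf'
    simpa using hf0.comp_hasDerivAt (0 : ℝ) AffineMap.hasDerivAt_lineMap
  have := hg.slope_le_of_hasDerivAt (by simp) (by simp) zero_lt_one hg'
  simpa [g, slope_def_field] using this

theorem StrictConcaveOn.eq_of_hasFDerivAt_eq_zero (hf : StrictConcaveOn ℝ s f) (hx : x ∈ s)
    (hy : y ∈ s) (hfx : HasFDerivAt f (0 : E →L[ℝ] ℝ) x) (hfy : HasFDerivAt f (0 : E →L[ℝ] ℝ) y) :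
    x = y :=
  hf.eq_of_isMaxOn (hf.concaveOn.isMaxOn_of_hasFDerivAt_eq_zero hx hfx)
    (hf.concaveOn.isMaxOn_of_hasFDerivAt_eq_zero hy hfy) hx hy

end CriticalPoints

theorem convex_setOf_strictMono {ι : Type*} [Preorder ι] : Convex ℝ {x : ι → ℝ | StrictMono x} := by
  intro x hx y hy a b ha hb hab i j hij
  simp only [Pi.add_apply, Pi.smul_apply, smul_eq_mul]
  rcases ha.lt_or_eq with ha | rfl
  · nlinarith [mul_lt_mul_of_pos_left (hx hij) ha, mul_le_mul_of_nonneg_left (hy hij).le hb]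
  · simpa [show b = 1 by linarith] using hy hij

theorem concaveOn_sum_log_sub {ι : Type*} [Fintype ι] [Preorder ι] [DecidableLT ι] :
    ConcaveOn ℝ {x : ι → ℝ | StrictMono x}
      (fun x => ∑ i, ∑ j ∈ Finset.univ.filter (fun j => i < j), Real.log (x j - x i)) := by
  refine ConcaveOn.sum convex_setOf_strictMono fun i _ =>
    ConcaveOn.sum convex_setOf_strictMono fun j hj => ?_
  have hij : i < j := (Finset.mem_filter.1 hj).2
  let ℓ : (ι → ℝ) →ₗ[ℝ] ℝ := LinearMap.proj (R := ℝ) (φ := fun _ => ℝ) j - LinearMap.proj i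
  have hℓ : ConcaveOn ℝ (ℓ ⁻¹' Ioi 0) (fun x => Real.log (x j - x i)) :=
    strictConcaveOn_log_Ioi.concaveOn.comp_linearMap ℓ
  exact hℓ.subset (fun x (hx : StrictMono x) => sub_pos.2 (hx hij)) convex_setOf_strictMono

theorem strictConcaveOn_mul_log_sub_mul {c : ℝ} (hc : 0 < c) (d : ℝ) :
    StrictConcaveOn ℝ (Ioi 0) (fun t => c * Real.log t - d * t) :=
  (strictConcaveOn_log_Ioi.const_mul hc).sub_convexOn ((LinearMap.mul ℝ ℝ d).convexOn (convex_Ioi 0))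

theorem stmt_14_general (n : ℕ) (α : ℝ) (hα : -1 < α)
    (F : (Fin n → ℝ) → ℝ)
    (hF : F = fun x => (∑ i, ∑ j ∈ Finset.univ.filter (fun j => i < j),
        Real.log (x j - x i)) + (∑ k, (α + 1) / 2 * Real.log (x k))
      - (1 / 2) * ∑ k, x k)
    (D : Set (Fin n → ℝ))
    (hD : D = {x | StrictMono x ∧ ∀ k, 0 < x k}) :
    StrictConcaveOn ℝ D F ∧
      ∀ x ∈ D, ∀ y ∈ D, fderiv ℝ F x = 0 → fderiv ℝ F y = 0 → x = y := by
  have hDeq : D = {x | StrictMono x} ∩ univ.pi fun _ => Ioi 0 := by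
    ext; simp [hD]
  have hDconv : Convex ℝ D :=
    hDeq ▸ convex_setOf_strictMono.inter (convex_pi fun _ _ => convex_Ioi 0)
  have hpairs := concaveOn_sum_log_sub.subset (hDeq ▸ inter_subset_left) hDconv
  have hcoord := (strictConcaveOn_univ_pi_sum fun _ =>
    strictConcaveOn_mul_log_sub_mul (by linarith : 0 < (α + 1) / 2) (1 / 2)).subset
      (hDeq ▸ inter_subset_right) hDconv
  have hconc : StrictConcaveOn ℝ D F := (hpairs.add_strictConcaveOn hcoord).congr fun x _ => by
    simp only [hF, Pi.add_apply, Finset.sum_sub_distrib, Finset.mul_sum, add_sub_assoc]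
  -- `fderiv` is junk `0` where `F` is not differentiable, so `fderiv ℝ F x = 0` only says that
  -- `x` is a critical point once this is known.
  have hdiff : ∀ x ∈ D, DifferentiableAt ℝ F x := by
    rw [hD, hF]
    rintro x ⟨hmono, hpos⟩
    fun_prop (disch := first
      | exact (sub_pos.2 (hmono (Finset.mem_filter.1 ‹_›).2)).ne'
      | exact (hpos _).ne')
  refine ⟨hconc, fun x hx y hy hx' hy' => hconc.eq_of_hasFDerivAt_eq_zero hx hy ?_ ?_⟩
  · exact hx' ▸ (hdiff x hx).hasFDerivAt
  · exact hy' ▸ (hdiff y hy).hasFDerivAt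

theorem stmt_14 (n : ℕ) (hn : 1 ≤ n) (α : ℝ) (hα : -1 < α)
    (F : (Fin n → ℝ) → ℝ)
    (hF : F = fun x => (∑ i, ∑ j ∈ Finset.univ.filter (fun j => i < j),
        Real.log (x j - x i)) + (∑ k, (α + 1) / 2 * Real.log (x k))
      - (1 / 2) * ∑ k, x k)
    (D : Set (Fin n → ℝ))
    (hD : D = {x | StrictMono x ∧ ∀ k, 0 < x k}) :
    StrictConcaveOn ℝ D F ∧
      ∀ x ∈ D, ∀ y ∈ D, fderiv ℝ F x = 0 → fderiv ℝ F y = 0 → x = y :=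
  stmt_14_general n α hα F hF D hD
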